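/- For every R ∈ 𝔯(V), writing Ric := Ric(R), Ric* := Ric*(R), τ := τ(R): (1) Ric*(π₁(R)) = (τ/n) g; (2) Ric*(π₂(R)) = (1/(n−1))[(τ/n) g − S Ric]; (3) Ric*(π₃(R)) = (−3/(n+1)) Λ Ric; (4) Ric*(π₄(R)) = Λ(Ric* + (3/(n+1)) Ric); (5) Ric*(π₅(R)) = (−τ/(n−1)) g + S((1/(n−1)) Ric + Ric*); (6) Ric*(π_j(R)) = 0 for j = 6, 7, 8; (7) the g-trace of Ric*(π_j(R)) vanishes for j = 2, …, 8. -/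

import Mathlib

/-!
Ric* is linear in the tensor, so each Ric*(πⱼ R) is a combination of the contractions of the
building blocks: for a bilinear form h, Ric*(h ∧ₜ g) = (1 − t(n − 1)) h − (tr_g h) g and
Ric*(h · g) = h, because contracting g against a linear form gives the form back; Ric*(ψ R) and
Ric*(μ R) are combinations of Ric, Ric* and their transposes, by antisymmetry in the first pair
and the first Bianchi identity. The traces then follow from tr_g g = n, tr_g Ric = tr_g Ric* = τ
and the vanishing of the trace of an antisymmetric form.
-/

open scoped BigOperators
open Pointwise

namespace GCT

variable {V : Type*} [AddCommGroup V] [Module ℝ V]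

/-- Linearity of a real valued function of one vector variable. -/
def IsLin (f : V → ℝ) : Prop :=
  (∀ x y : V, f (x + y) = f x + f y) ∧ (∀ (c : ℝ) (x : V), f (c • x) = c * f x)

/-- Bilinearity. -/
def IsBilin (h : V → V → ℝ) : Prop :=
  (∀ y, IsLin (fun x => h x y)) ∧ (∀ x, IsLin (fun y => h x y))

/-- 4-linearity. -/
def IsMulti4 (F : V → V → V → V → ℝ) : Prop :=
  (∀ y z w, IsLin (fun x => F x y z w)) ∧ (∀ x z w, IsLin (fun y => F x y z w)) ∧
    (∀ x y w, IsLin (fun z => F x y z w)) ∧ (∀ x y z, IsLin (fun w => F x y z w))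

/-- The space 𝔯(V) of generalized curvature tensors. -/
def rSet (V : Type*) [AddCommGroup V] [Module ℝ V] : Set (V → V → V → V → ℝ) :=
  {F | IsMulti4 F ∧ (∀ x y z w, F x y z w = - F y x z w) ∧
    (∀ x y z w, F x y z w + F y z x w + F z x y w = 0)}

/-- The space 𝔞(V) of algebraic curvature tensors. -/
def aSet (V : Type*) [AddCommGroup V] [Module ℝ V] : Set (V → V → V → V → ℝ) :=
  {F | F ∈ rSet V ∧ ∀ x y z w, F x y z w = - F x y w z}

/-- The space 𝔰(V). -/
def sSet (V : Type*) [AddCommGroup V] [Module ℝ V] : Set (V → V → V → V → ℝ) :=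
  {F | F ∈ rSet V ∧ ∀ x y z w, F x y z w = F x y w z}

/-- The conjugate tensor R*. -/
def conj (F : V → V → V → V → ℝ) : V → V → V → V → ℝ := fun x y z w => - F x y w z

/-- The product h·k of two bilinear forms. -/
def prodB (h k : V → V → ℝ) : V → V → V → V → ℝ := fun x y z w => h x y * k z w

/-- The wedge product h ∧_t k of two bilinear forms. -/
def wedge (t : ℝ) (h k : V → V → ℝ) : V → V → V → V → ℝ :=
  fun x y z w => h x z * k y w - h y z * k x w - t * (h x w * k y z - h y w * k x z)

/-- Antisymmetric part Λh. -/
noncomputable def lamB (h : V → V → ℝ) : V → V → ℝ := fun x y => (h x y - h y x) / 2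

/-- Symmetric part Sh. -/
noncomputable def symB (h : V → V → ℝ) : V → V → ℝ := fun x y => (h x y + h y x) / 2

/-- The idempotent ψ. -/
noncomputable def psi (F : V → V → V → V → ℝ) : V → V → V → V → ℝ :=
  fun x y z w => (F x y z w + F y x w z + F z w x y + F w z y x) / 4

/-- The idempotent μ. -/
noncomputable def mu (F : V → V → V → V → ℝ) : V → V → V → V → ℝ :=
  fun x y z w =>
    (3 * F x y z w + 3 * F x y w z + F x w z y + F x z w y + F w y z x + F z y w x) / 8

/-- A linear equivalence is a g-isometry. -/
def IsIsometry (g : V → V → ℝ) (φ : V ≃ₗ[ℝ] V) : Prop := ∀ x y, g (φ x) (φ y) = g x y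

/-- Pull back of a 4-tensor along a linear equivalence (the natural action). -/
def pullT (φ : V ≃ₗ[ℝ] V) (F : V → V → V → V → ℝ) : V → V → V → V → ℝ :=
  fun x y z w => F (φ x) (φ y) (φ z) (φ w)

/-- Invariance of a set of 4-tensors under the orthogonal group O(V,g). -/
def OInv (g : V → V → ℝ) (S : Set (V → V → V → V → ℝ)) : Prop :=
  ∀ φ : V ≃ₗ[ℝ] V, IsIsometry g φ → ∀ F ∈ S, pullT φ F ∈ S

/-- Irreducibility of a subspace of 4-tensors as an O(V,g)-module:
there is no proper nonzero invariant subspace. -/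
def OIrred (g : V → V → ℝ) (W : Set (V → V → V → V → ℝ)) : Prop :=
  ∀ U : Submodule ℝ (V → V → V → V → ℝ), (U : Set (V → V → V → V → ℝ)) ⊆ W →
    (∀ φ : V ≃ₗ[ℝ] V, IsIsometry g φ → ∀ F ∈ U, pullT φ F ∈ U) →
    (U : Set (V → V → V → V → ℝ)) = {0} ∨ (U : Set (V → V → V → V → ℝ)) = W

/-- Isomorphism of two invariant subspaces as O(V,g)-modules. -/
def OEquivMod (g : V → V → ℝ) (S T : Set (V → V → V → V → ℝ)) : Prop :=
  ∃ e : (V → V → V → V → ℝ) →ₗ[ℝ] (V → V → V → V → ℝ),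
    Set.BijOn e S T ∧
      ∀ φ : V ≃ₗ[ℝ] V, IsIsometry g φ → ∀ F ∈ S, e (pullT φ F) = pullT φ (e F)

variable (n : ℕ) (b : Module.Basis (Fin n) ℝ V) (g : V → V → ℝ)

/-- Inverse metric components g^{ij}. -/
noncomputable def ginv : Matrix (Fin n) (Fin n) ℝ :=
  (Matrix.of fun i j => g (b i) (b j))⁻¹

/-- Ric(R)(x,y) := Σ g^{ij} R(e_i,x,y,e_j). -/
noncomputable def Ric (F : V → V → V → V → ℝ) : V → V → ℝ :=
  fun x y => ∑ i, ∑ j, ginv n b g i j * F (b i) x y (b j)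

/-- Ric*(R)(x,y) := Σ g^{ij} R(x,e_i,e_j,y). -/
noncomputable def RicS (F : V → V → V → V → ℝ) : V → V → ℝ :=
  fun x y => ∑ i, ∑ j, ginv n b g i j * F x (b i) (b j) y

/-- The generalized scalar curvature τ(R). -/
noncomputable def tau (F : V → V → V → V → ℝ) : ℝ :=
  ∑ i, ∑ j, ∑ k, ∑ l, ginv n b g i l * ginv n b g j k * F (b i) (b j) (b k) (b l)

/-- The g-trace of a bilinear form. -/
noncomputable def trg (h : V → V → ℝ) : ℝ := ∑ i, ∑ j, ginv n b g i j * h (b i) (b j)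

/-- The scalar product on 4-tensors given by full contraction with g. -/
noncomputable def inner4 (F T : V → V → V → V → ℝ) : ℝ :=
  ∑ i, ∑ j, ∑ k, ∑ l, ∑ i', ∑ j', ∑ k', ∑ l',
    ginv n b g i i' * ginv n b g j j' * ginv n b g k k' * ginv n b g l l' *
      F (b i) (b j) (b k) (b l) * T (b i') (b j') (b k') (b l')

/-- W-projection π₁. -/
noncomputable def pi1 (F : V → V → V → V → ℝ) : V → V → V → V → ℝ :=
  (-(tau n b g F) / ((n : ℝ) * ((n : ℝ) - 1))) • wedge 0 g g

/-- W-projection π₂. -/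
noncomputable def pi2 (F : V → V → V → V → ℝ) : V → V → V → V → ℝ :=
  ((1 : ℝ) / ((n : ℝ) - 1)) • wedge 0 (((tau n b g F) / (n : ℝ)) • g - symB (Ric n b g F)) g

/-- W-projection π₃. -/
noncomputable def pi3 (F : V → V → V → V → ℝ) : V → V → V → V → ℝ :=
  ((-1 : ℝ) / ((n : ℝ) + 1)) •
    ((2 : ℝ) • prodB (lamB (Ric n b g F)) g + wedge 0 (lamB (Ric n b g F)) g)

/-- W-projection π₄. -/
noncomputable def pi4 (F : V → V → V → V → ℝ) : V → V → V → V → ℝ :=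
  ((-1 : ℝ) / ((n : ℝ) ^ 2 - 4)) •
      ((2 : ℝ) • prodB (lamB (RicS n b g F)) g + wedge ((n : ℝ) + 1) (lamB (RicS n b g F)) g)
    - ((3 : ℝ) / (((n : ℝ) ^ 2 - 4) * ((n : ℝ) + 1))) •
      ((2 : ℝ) • prodB (lamB (Ric n b g F)) g + wedge ((n : ℝ) + 1) (lamB (Ric n b g F)) g)

/-- W-projection π₅. -/
noncomputable def pi5 (F : V → V → V → V → ℝ) : V → V → V → V → ℝ :=
  ((1 : ℝ) / (((n : ℝ) - 1) * ((n : ℝ) - 2))) •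
    ((tau n b g F) • wedge 0 g g -
      ((1 : ℝ) / (n : ℝ)) •
        wedge ((n : ℝ) - 1) (symB (Ric n b g F + ((n : ℝ) - 1) • RicS n b g F)) g)

/-- W-projection π₆. -/
noncomputable def pi6 (F : V → V → V → V → ℝ) : V → V → V → V → ℝ :=
  psi F + ((1 : ℝ) / (2 * ((n : ℝ) - 2))) • wedge 1 (symB (Ric n b g F + RicS n b g F)) g
    - ((tau n b g F) / (((n : ℝ) - 1) * ((n : ℝ) - 2))) • wedge 0 g g

/-- W-projection π₇. -/
noncomputable def pi7 (F : V → V → V → V → ℝ) : V → V → V → V → ℝ :=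
  mu F + ((1 : ℝ) / (2 * (n : ℝ))) • wedge (-1) (symB (Ric n b g F - RicS n b g F)) g
    + ((1 : ℝ) / (2 * ((n : ℝ) + 2))) • prodB (lamB ((3 : ℝ) • Ric n b g F - RicS n b g F)) g
    + ((1 : ℝ) / (4 * ((n : ℝ) + 2))) • wedge (-1) (lamB ((3 : ℝ) • Ric n b g F - RicS n b g F)) g

/-- W-projection π₈. -/
noncomputable def pi8 (F : V → V → V → V → ℝ) : V → V → V → V → ℝ :=
  F - psi F - mu F
    + ((1 : ℝ) / (2 * ((n : ℝ) - 2))) • prodB (lamB (Ric n b g F + RicS n b g F)) g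
    + ((1 : ℝ) / (4 * ((n : ℝ) - 2))) • wedge 3 (lamB (Ric n b g F + RicS n b g F)) g

/-- A-projection α₁. -/
noncomputable def al1 (F : V → V → V → V → ℝ) : V → V → V → V → ℝ :=
  (-(tau n b g F) / ((n : ℝ) * ((n : ℝ) - 1))) • wedge 0 g g

/-- A-projection α₂. -/
noncomputable def al2 (F : V → V → V → V → ℝ) : V → V → V → V → ℝ :=
  ((-1 : ℝ) / (2 * ((n : ℝ) - 2))) • wedge 1 (symB (Ric n b g F + RicS n b g F)) g
    + ((2 * tau n b g F) / ((n : ℝ) * ((n : ℝ) - 2))) • wedge 0 g g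

/-- A-projection α₃. -/
noncomputable def al3 (F : V → V → V → V → ℝ) : V → V → V → V → ℝ :=
  ((-1 : ℝ) / (2 * (n : ℝ))) • wedge (-1) (symB (Ric n b g F - RicS n b g F)) g

/-- A-projection α₄. -/
noncomputable def al4 (F : V → V → V → V → ℝ) : V → V → V → V → ℝ :=
  ((-1 : ℝ) / (4 * ((n : ℝ) + 2))) •
    ((2 : ℝ) • prodB (lamB ((3 : ℝ) • Ric n b g F - RicS n b g F)) g
      + wedge (-1) (lamB ((3 : ℝ) • Ric n b g F - RicS n b g F)) g)

/-- A-projection α₅. -/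
noncomputable def al5 (F : V → V → V → V → ℝ) : V → V → V → V → ℝ :=
  ((-1 : ℝ) / (4 * ((n : ℝ) - 2))) •
    ((2 : ℝ) • prodB (lamB (Ric n b g F + RicS n b g F)) g
      + wedge 3 (lamB (Ric n b g F + RicS n b g F)) g)

/-- A-projection α₆. -/
noncomputable def al6 (F : V → V → V → V → ℝ) : V → V → V → V → ℝ :=
  psi F - al1 n b g F - al2 n b g F

/-- A-projection α₇. -/
noncomputable def al7 (F : V → V → V → V → ℝ) : V → V → V → V → ℝ :=
  mu F - al3 n b g F - al4 n b g F

/-- A-projection α₈. -/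
noncomputable def al8 (F : V → V → V → V → ℝ) : V → V → V → V → ℝ :=
  F - mu F - psi F - al5 n b g F

/-- Curvature tensors of constant curvature type. -/
noncomputable def uSet : Set (V → V → V → V → ℝ) :=
  {F | ∃ c : ℝ, ∀ x y z w, F x y z w = c * (g x w * g y z - g x z * g y w)}

/-- Ricci traceless algebraic curvature tensors built from a traceless symmetric form. -/
noncomputable def zSet : Set (V → V → V → V → ℝ) :=
  {F | ∃ Xi : V → V → ℝ, IsBilin Xi ∧ (∀ x y, Xi x y = Xi y x) ∧ trg n b g Xi = 0 ∧
    ∀ x y z w, F x y z w = Xi x w * g y z + g x w * Xi y z - Xi x z * g y w - g x z * Xi y w}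

/-- Weyl type (Ricci flat algebraic) curvature tensors. -/
noncomputable def wSet : Set (V → V → V → V → ℝ) :=
  {F | F ∈ aSet V ∧ Ric n b g F = fun _ _ => 0}

/-- The projective curvature tensor p(R). -/
noncomputable def pProj (F : V → V → V → V → ℝ) : V → V → V → V → ℝ :=
  F - pi1 n b g F - pi2 n b g F - pi3 n b g F

variable {n b g}

open scoped Matrix

section Linearity

variable {f f' : V → ℝ} {h k : V → V → ℝ}

lemma IsLin.add (hf : IsLin f) (hf' : IsLin f') : IsLin (fun x => f x + f' x) :=
  ⟨fun x y => by simp only [hf.1, hf'.1]; ring, fun c x => by simp only [hf.2, hf'.2]; ring⟩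

lemma IsLin.sub (hf : IsLin f) (hf' : IsLin f') : IsLin (fun x => f x - f' x) :=
  ⟨fun x y => by simp only [hf.1, hf'.1]; ring, fun c x => by simp only [hf.2, hf'.2]; ring⟩

lemma IsLin.const_mul (hf : IsLin f) (c : ℝ) : IsLin (fun x => c * f x) :=
  ⟨fun x y => by simp only [hf.1]; ring, fun d x => by simp only [hf.2]; ring⟩

lemma IsLin.div_const (hf : IsLin f) (c : ℝ) : IsLin (fun x => f x / c) :=
  ⟨fun x y => by simp only [hf.1]; ring, fun d x => by simp only [hf.2]; ring⟩

def IsLin.toLinearMap (hf : IsLin f) : V →ₗ[ℝ] ℝ where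
  toFun := f
  map_add' := hf.1
  map_smul' := hf.2

lemma IsLin.eq_sum_repr {ι : Type*} [Fintype ι] (hf : IsLin f) (e : Module.Basis ι ℝ V)
    (x : V) : f x = ∑ i, e.repr x i * f (e i) := by
  conv_lhs => rw [← e.sum_repr x]
  exact (map_sum hf.toLinearMap _ _).trans (by simp [IsLin.toLinearMap])

lemma IsBilin.add (hh : IsBilin h) (hk : IsBilin k) : IsBilin (h + k) :=
  ⟨fun y => (hh.1 y).add (hk.1 y), fun x => (hh.2 x).add (hk.2 x)⟩

lemma IsBilin.sub (hh : IsBilin h) (hk : IsBilin k) : IsBilin (h - k) :=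
  ⟨fun y => (hh.1 y).sub (hk.1 y), fun x => (hh.2 x).sub (hk.2 x)⟩

lemma IsBilin.smul (hh : IsBilin h) (c : ℝ) : IsBilin (c • h) :=
  ⟨fun y => (hh.1 y).const_mul c, fun x => (hh.2 x).const_mul c⟩

lemma IsBilin.symB (hh : IsBilin h) : IsBilin (symB h) :=
  ⟨fun y => ((hh.1 y).add (hh.2 y)).div_const 2, fun x => ((hh.2 x).add (hh.1 x)).div_const 2⟩

lemma IsBilin.lamB (hh : IsBilin h) : IsBilin (lamB h) :=
  ⟨fun y => ((hh.1 y).sub (hh.2 y)).div_const 2, fun x => ((hh.2 x).sub (hh.1 x)).div_const 2⟩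

end Linearity

structure IsNondegSymm (g : V → V → ℝ) : Prop where
  isBilin : IsBilin g
  symm : ∀ x y, g x y = g y x
  nondegenerate : ∀ x, (∀ y, g x y = 0) → x = 0

noncomputable def gram (b : Module.Basis (Fin n) ℝ V) (g : V → V → ℝ) : Matrix (Fin n) (Fin n) ℝ :=
  Matrix.of fun i j => g (b i) (b j)

lemma ginv_eq_inv_gram : ginv n b g = (gram b g)⁻¹ := rfl

lemma gram_transpose (hgs : ∀ x y, g x y = g y x) : (gram b g)ᵀ = gram b g := by
  ext i j
  exact hgs _ _

lemma ginv_symm (hgs : ∀ x y, g x y = g y x) (i j : Fin n) : ginv n b g i j = ginv n b g j i := by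
  rw [ginv_eq_inv_gram, ← Matrix.transpose_apply (gram b g)⁻¹, Matrix.transpose_nonsing_inv,
    gram_transpose hgs]

lemma gram_mulVec_repr (hgb : IsBilin g) (x : V) :
    gram b g *ᵥ b.repr x = fun i => g (b i) x := by
  funext i
  rw [(hgb.2 (b i)).eq_sum_repr b x]
  simp only [Matrix.mulVec, dotProduct, gram, Matrix.of_apply, mul_comm]

lemma IsNondegSymm.isUnit_det_gram (hg : IsNondegSymm g) : IsUnit (gram b g).det := by
  classical
  refine isUnit_iff_ne_zero.2 fun hdet => ?_
  obtain ⟨c, hc0, hc⟩ := Matrix.exists_mulVec_eq_zero_iff.2 hdet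
  set x : V := ∑ i, c i • b i
  have hrepr : b.repr x = c := b.repr_sum_self c
  have hbx : ∀ i, g (b i) x = 0 := fun i => by
    simpa [← hrepr, gram_mulVec_repr hg.isBilin] using congrFun hc i
  have hx : x = 0 := hg.nondegenerate x fun y => by
    rw [(hg.isBilin.2 x).eq_sum_repr b y]
    exact Finset.sum_eq_zero fun i _ => by rw [hg.symm, hbx, mul_zero]
  exact hc0 (by rw [← hrepr, hx, map_zero]; rfl)

lemma IsNondegSymm.sum_ginv_mul (hg : IsNondegSymm g) (x : V) (j : Fin n) :
    ∑ i, ginv n b g i j * g (b i) x = b.repr x j := by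
  have hG : b.repr x ᵥ* gram b g = fun i => g (b i) x := by
    rw [← gram_transpose hg.symm, Matrix.vecMul_transpose, gram_mulVec_repr hg.isBilin]
  calc ∑ i, ginv n b g i j * g (b i) x = ((fun i => g (b i) x) ᵥ* ginv n b g) j := by
        simp only [Matrix.vecMul, dotProduct, mul_comm]
    _ = (b.repr x ᵥ* (gram b g * ginv n b g)) j := by rw [← hG, Matrix.vecMul_vecMul]
    _ = b.repr x j := by
        rw [ginv_eq_inv_gram, Matrix.mul_nonsing_inv _ hg.isUnit_det_gram, Matrix.vecMul_one]

section Trace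

variable {A B : V → V → ℝ}

/- Linearity of `trg` is stated for pointwise formulas `fun u v => …`, so that `simp` can split
the contraction of an explicit tensor expression into contractions of its terms. -/

lemma trg_add_fun : trg n b g (fun u v => A u v + B u v) = trg n b g A + trg n b g B := by
  simp only [trg, mul_add, Finset.sum_add_distrib]

lemma trg_sub_fun : trg n b g (fun u v => A u v - B u v) = trg n b g A - trg n b g B := by
  simp only [trg, mul_sub, Finset.sum_sub_distrib]

lemma trg_neg_fun : trg n b g (fun u v => -A u v) = -trg n b g A := by
  simp only [trg, mul_neg, Finset.sum_neg_distrib]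

lemma trg_const_mul_fun (c : ℝ) : trg n b g (fun u v => c * A u v) = c * trg n b g A := by
  simp only [trg, Finset.mul_sum]
  exact Finset.sum_congr rfl fun i _ => Finset.sum_congr rfl fun j _ => by ring

lemma trg_mul_const_fun (c : ℝ) : trg n b g (fun u v => A u v * c) = trg n b g A * c := by
  rw [mul_comm, ← trg_const_mul_fun]
  simp only [mul_comm]

lemma trg_div_const_fun (c : ℝ) : trg n b g (fun u v => A u v / c) = trg n b g A / c := by
  simp only [div_eq_mul_inv, trg_mul_const_fun]

lemma trg_add : trg n b g (A + B) = trg n b g A + trg n b g B := trg_add_fun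

lemma trg_sub : trg n b g (A - B) = trg n b g A - trg n b g B := trg_sub_fun

lemma trg_smul (c : ℝ) : trg n b g (c • A) = c * trg n b g A := trg_const_mul_fun c

lemma trg_zero : trg n b g (0 : V → V → ℝ) = 0 := by
  simp [trg]

lemma trg_swap (hgs : ∀ x y, g x y = g y x) : trg n b g (fun u v => A v u) = trg n b g A := by
  rw [trg, Finset.sum_comm]
  exact Finset.sum_congr rfl fun i _ => Finset.sum_congr rfl fun j _ => by rw [ginv_symm hgs]

lemma trg_symB (hgs : ∀ x y, g x y = g y x) : trg n b g (symB A) = trg n b g A := by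
  change trg n b g (fun u v => (A u v + A v u) / 2) = _
  rw [trg_div_const_fun, trg_add_fun, trg_swap hgs]
  ring

lemma trg_lamB (hgs : ∀ x y, g x y = g y x) : trg n b g (lamB A) = 0 := by
  change trg n b g (fun u v => (A u v - A v u) / 2) = _
  rw [trg_div_const_fun, trg_sub_fun, trg_swap hgs, sub_self, zero_div]

lemma IsNondegSymm.trg_self (hg : IsNondegSymm g) : trg n b g g = n := by
  rw [trg, Finset.sum_comm]
  simp [hg.sum_ginv_mul, Finset.sum_const]

lemma IsNondegSymm.trg_mul_left_g (hg : IsNondegSymm g) {f : V → ℝ} (hf : IsLin f) (y : V) :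
    trg n b g (fun u v => f v * g u y) = f y := by
  rw [trg, Finset.sum_comm, hf.eq_sum_repr b y]
  refine Finset.sum_congr rfl fun j _ => ?_
  rw [← hg.sum_ginv_mul y j, Finset.sum_mul]
  exact Finset.sum_congr rfl fun i _ => by ring

lemma IsNondegSymm.trg_mul_right_g (hg : IsNondegSymm g) {f : V → ℝ} (hf : IsLin f) (y : V) :
    trg n b g (fun u v => f u * g v y) = f y := by
  rw [← trg_swap hg.symm]
  exact hg.trg_mul_left_g hf y

end Trace

section Ricci

variable {F G : V → V → V → V → ℝ}

lemma RicS_apply (x y : V) : RicS n b g F x y = trg n b g (fun u v => F x u v y) := rfl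

lemma Ric_apply (x y : V) : Ric n b g F x y = trg n b g (fun u v => F u x y v) := rfl

lemma RicS_add : RicS n b g (F + G) = RicS n b g F + RicS n b g G :=
  funext₂ fun x y => trg_add_fun (A := fun u v => F x u v y) (B := fun u v => G x u v y)

lemma RicS_sub : RicS n b g (F - G) = RicS n b g F - RicS n b g G :=
  funext₂ fun x y => trg_sub_fun (A := fun u v => F x u v y) (B := fun u v => G x u v y)

lemma RicS_smul (c : ℝ) : RicS n b g (c • F) = c • RicS n b g F :=
  funext₂ fun x y => trg_const_mul_fun (A := fun u v => F x u v y) c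

lemma isLin_trg {A : V → V → V → ℝ} (hA : ∀ u v, IsLin (fun x => A x u v)) :
    IsLin (fun x => trg n b g (A x)) := by
  refine ⟨fun x y => ?_, fun c x => ?_⟩
  · simp only [trg, (hA _ _).1, mul_add, Finset.sum_add_distrib]
  · simp only [trg, (hA _ _).2, Finset.mul_sum]
    exact Finset.sum_congr rfl fun i _ => Finset.sum_congr rfl fun j _ => by ring

lemma isBilin_Ric (hF : IsMulti4 F) : IsBilin (Ric n b g F) :=
  ⟨fun y => isLin_trg fun u v => hF.2.1 u y v, fun x => isLin_trg fun u v => hF.2.2.1 u x v⟩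

lemma isBilin_RicS (hF : IsMulti4 F) : IsBilin (RicS n b g F) :=
  ⟨fun y => isLin_trg fun u v => hF.1 u v y, fun x => isLin_trg fun u v => hF.2.2.2 x u v⟩

lemma trg_Ric : trg n b g (Ric n b g F) = tau n b g F := by
  simp only [trg, Ric, tau, Finset.mul_sum]
  conv_lhs => enter [2, i]; rw [Finset.sum_comm]
  rw [Finset.sum_comm]
  exact Finset.sum_congr rfl fun k _ => Finset.sum_congr rfl fun i _ =>
    Finset.sum_congr rfl fun j _ => Finset.sum_congr rfl fun l _ => by ring

lemma trg_RicS : trg n b g (RicS n b g F) = tau n b g F := by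
  simp only [trg, RicS, tau, Finset.mul_sum]
  refine Finset.sum_congr rfl fun i _ => ?_
  rw [Finset.sum_comm]
  refine Finset.sum_congr rfl fun j _ => ?_
  rw [Finset.sum_comm]
  exact Finset.sum_congr rfl fun k _ => Finset.sum_congr rfl fun l _ => by ring

end Ricci

section Contractions

variable {F : V → V → V → V → ℝ}

lemma RicS_wedge (hg : IsNondegSymm g) (t : ℝ) {h : V → V → ℝ} (hh : IsBilin h) :
    RicS n b g (wedge t h g) =
      fun x y => (1 - t * ((n : ℝ) - 1)) * h x y - trg n b g h * g x y := by
  funext x y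
  have hxv : trg n b g (fun u v => h u y * g x v) = h x y := by
    simpa only [hg.symm x] using hg.trg_mul_right_g (hh.1 y) x
  simp only [RicS_apply, wedge, trg_sub_fun, trg_const_mul_fun, trg_mul_const_fun,
    hg.trg_mul_left_g (hh.2 x), hxv, hg.trg_self]
  ring

lemma RicS_prodB (hg : IsNondegSymm g) {h : V → V → ℝ} (hh : IsBilin h) :
    RicS n b g (prodB h g) = h :=
  funext₂ fun x y => hg.trg_mul_right_g (hh.2 x) y

lemma RicS_psi (hgs : ∀ x y, g x y = g y x) :
    RicS n b g (psi F) = fun x y =>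
      (RicS n b g F x y + Ric n b g F x y + Ric n b g F y x + RicS n b g F y x) / 4 := by
  funext x y
  simp only [RicS_apply, Ric_apply, psi, trg_div_const_fun, trg_add_fun]
  rw [← trg_swap hgs (A := fun u v => F v y x u), ← trg_swap hgs (A := fun u v => F y v u x)]

lemma RicS_mu (hgs : ∀ x y, g x y = g y x) (hF : F ∈ rSet V) :
    RicS n b g (mu F) = fun x y =>
      (3 * RicS n b g F x y + RicS n b g F y x - 5 * Ric n b g F x y + Ric n b g F y x) / 8 := by
  obtain ⟨-, hanti, hbianchi⟩ := hF
  have hswap (x y : V) : trg n b g (fun u v => F x u y v) = -Ric n b g F x y := by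
    simp only [hanti x, trg_neg_fun, Ric_apply]
  have hcyc (x y : V) : trg n b g (fun u v => F x y u v) = Ric n b g F y x - Ric n b g F x y := by
    have h (u v : V) : F x y u v = -F y u x v - F u x y v := by linarith [hbianchi x y u v]
    simp only [h, trg_sub_fun, trg_neg_fun, hswap, Ric_apply]
    ring
  have hpair (x y : V) : trg n b g (fun u v => F v u y x) = 0 := by
    have h := trg_swap (n := n) (b := b) hgs (A := fun u v => F v u y x)
    rw [show (fun u v => F u v y x) = fun u v => -F v u y x from
      funext₂ fun u v => hanti u v y x, trg_neg_fun] at h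
    linarith
  funext x y
  simp only [RicS_apply, mu, trg_div_const_fun, trg_add_fun, trg_const_mul_fun]
  rw [← trg_swap hgs (A := fun u v => F x y v u), ← trg_swap hgs (A := fun u v => F x v y u),
    ← trg_swap hgs (A := fun u v => F y u v x), hswap, hcyc, hpair]
  ring

end Contractions

section Projections

variable {F : V → V → V → V → ℝ}

lemma RicS_pi1 (hg : IsNondegSymm g) (hn₁ : n ≠ 1) (F : V → V → V → V → ℝ) :
    RicS n b g (pi1 n b g F) = (tau n b g F / n) • g := by
  have : (n : ℝ) - 1 ≠ 0 := sub_ne_zero.2 (by exact_mod_cast hn₁)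
  rw [pi1, RicS_smul, RicS_wedge hg 0 hg.isBilin, hg.trg_self]
  funext x y
  simp only [Pi.smul_apply, smul_eq_mul]
  field_simp
  ring

lemma trg_tau_div_smul_sub_symB_Ric (hg : IsNondegSymm g) (hn₀ : n ≠ 0)
    (F : V → V → V → V → ℝ) : trg n b g ((tau n b g F / n) • g - symB (Ric n b g F)) = 0 := by
  have : (n : ℝ) ≠ 0 := by exact_mod_cast hn₀
  rw [trg_sub, trg_smul, hg.trg_self, trg_symB hg.symm, trg_Ric]
  field_simp
  ring

lemma RicS_pi2 (hg : IsNondegSymm g) (hn₀ : n ≠ 0) (hF : IsMulti4 F) :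
    RicS n b g (pi2 n b g F) =
      (1 / ((n : ℝ) - 1)) • ((tau n b g F / n) • g - symB (Ric n b g F)) := by
  rw [pi2, RicS_smul, RicS_wedge hg 0 ((hg.isBilin.smul _).sub (isBilin_Ric hF).symB),
    trg_tau_div_smul_sub_symB_Ric hg hn₀]
  funext x y
  simp only [Pi.smul_apply, smul_eq_mul]
  ring

lemma trg_RicS_pi2 (hg : IsNondegSymm g) (hn₀ : n ≠ 0) (hF : IsMulti4 F) :
    trg n b g (RicS n b g (pi2 n b g F)) = 0 := by
  rw [RicS_pi2 hg hn₀ hF, trg_smul, trg_tau_div_smul_sub_symB_Ric hg hn₀, mul_zero]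

lemma RicS_pi3 (hg : IsNondegSymm g) (hF : IsMulti4 F) :
    RicS n b g (pi3 n b g F) = (-3 / ((n : ℝ) + 1)) • lamB (Ric n b g F) := by
  have hΛ : IsBilin (lamB (Ric n b g F)) := (isBilin_Ric hF).lamB
  rw [pi3, RicS_smul, RicS_add, RicS_smul, RicS_prodB hg hΛ, RicS_wedge hg 0 hΛ, trg_lamB hg.symm]
  funext x y
  simp only [Pi.smul_apply, Pi.add_apply, smul_eq_mul]
  ring

lemma RicS_pi4 (hg : IsNondegSymm g) (hn₂ : n ≠ 2) (hF : IsMulti4 F) :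
    RicS n b g (pi4 n b g F) = lamB (RicS n b g F + (3 / ((n : ℝ) + 1)) • Ric n b g F) := by
  have : (n : ℝ) ^ 2 - 4 ≠ 0 := by
    have : (n : ℝ) ≠ 2 := by exact_mod_cast hn₂
    have : (n : ℝ) + 2 ≠ 0 := by positivity
    rw [show (n : ℝ) ^ 2 - 4 = ((n : ℝ) - 2) * (n + 2) by ring]
    exact mul_ne_zero (sub_ne_zero.2 ‹_›) this
  have : (n : ℝ) + 1 ≠ 0 := by positivity
  have hRic : IsBilin (Ric n b g F) := isBilin_Ric hF
  have hRicS : IsBilin (RicS n b g F) := isBilin_RicS hF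
  have hΛ := hRic.lamB
  have hΛ' := hRicS.lamB
  rw [pi4, RicS_sub, RicS_smul, RicS_smul, RicS_add, RicS_add, RicS_smul, RicS_smul,
    RicS_prodB hg hΛ, RicS_prodB hg hΛ', RicS_wedge hg _ hΛ, RicS_wedge hg _ hΛ',
    trg_lamB hg.symm, trg_lamB hg.symm]
  funext x y
  simp only [Pi.smul_apply, Pi.add_apply, Pi.sub_apply, smul_eq_mul, lamB]
  field_simp
  ring

lemma RicS_pi5 (hg : IsNondegSymm g) (hn : 3 ≤ n) (hF : IsMulti4 F) :
    RicS n b g (pi5 n b g F) = (-tau n b g F / ((n : ℝ) - 1)) • g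
      + symB ((1 / ((n : ℝ) - 1)) • Ric n b g F + RicS n b g F) := by
  have hn' : (3 : ℝ) ≤ n := by exact_mod_cast hn
  have : (n : ℝ) ≠ 0 := by linarith
  have : (n : ℝ) - 1 ≠ 0 := by linarith
  have : (n : ℝ) - 2 ≠ 0 := by linarith
  have hRic : IsBilin (Ric n b g F) := isBilin_Ric hF
  have hRicS : IsBilin (RicS n b g F) := isBilin_RicS hF
  have hS := (hRic.add (hRicS.smul ((n : ℝ) - 1))).symB
  have htr : trg n b g (symB (Ric n b g F + ((n : ℝ) - 1) • RicS n b g F)) = n * tau n b g F := by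
    rw [trg_symB hg.symm, trg_add, trg_smul, trg_Ric, trg_RicS]
    ring
  rw [pi5, RicS_smul, RicS_sub, RicS_smul, RicS_smul, RicS_wedge hg 0 hg.isBilin,
    RicS_wedge hg _ hS, htr, hg.trg_self]
  funext x y
  simp only [Pi.smul_apply, Pi.add_apply, Pi.sub_apply, smul_eq_mul, symB]
  field_simp
  ring

lemma trg_RicS_pi5 (hg : IsNondegSymm g) (hn : 3 ≤ n) (hF : IsMulti4 F) :
    trg n b g (RicS n b g (pi5 n b g F)) = 0 := by
  have : (n : ℝ) - 1 ≠ 0 := by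
    have : (3 : ℝ) ≤ n := by exact_mod_cast hn
    linarith
  rw [RicS_pi5 hg hn hF, trg_add, trg_smul, hg.trg_self, trg_symB hg.symm, trg_add, trg_smul,
    trg_Ric, trg_RicS]
  field_simp
  ring

lemma RicS_pi6 (hg : IsNondegSymm g) (hn₁ : n ≠ 1) (hn₂ : n ≠ 2) (hF : IsMulti4 F) :
    RicS n b g (pi6 n b g F) = 0 := by
  have : (n : ℝ) - 1 ≠ 0 := sub_ne_zero.2 (by exact_mod_cast hn₁)
  have : (n : ℝ) - 2 ≠ 0 := sub_ne_zero.2 (by exact_mod_cast hn₂)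
  have hRic : IsBilin (Ric n b g F) := isBilin_Ric hF
  have hRicS : IsBilin (RicS n b g F) := isBilin_RicS hF
  have hS := (hRic.add hRicS).symB
  have htr : trg n b g (symB (Ric n b g F + RicS n b g F)) = 2 * tau n b g F := by
    rw [trg_symB hg.symm, trg_add, trg_Ric, trg_RicS]
    ring
  rw [pi6, RicS_sub, RicS_add, RicS_smul, RicS_smul, RicS_psi hg.symm, RicS_wedge hg 1 hS,
    RicS_wedge hg 0 hg.isBilin, htr, hg.trg_self]
  funext x y
  simp only [Pi.smul_apply, Pi.add_apply, Pi.sub_apply, Pi.zero_apply, smul_eq_mul, symB]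
  field_simp
  ring

lemma RicS_pi7 (hg : IsNondegSymm g) (hn₀ : n ≠ 0) (hF : F ∈ rSet V) :
    RicS n b g (pi7 n b g F) = 0 := by
  have : (n : ℝ) ≠ 0 := by exact_mod_cast hn₀
  have : (n : ℝ) + 2 ≠ 0 := by positivity
  have hRic : IsBilin (Ric n b g F) := isBilin_Ric hF.1
  have hRicS : IsBilin (RicS n b g F) := isBilin_RicS hF.1
  have hS := (hRic.sub hRicS).symB
  have hΛ := ((hRic.smul 3).sub hRicS).lamB
  have htr : trg n b g (symB (Ric n b g F - RicS n b g F)) = 0 := by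
    rw [trg_symB hg.symm, trg_sub, trg_Ric, trg_RicS, sub_self]
  rw [pi7, RicS_add, RicS_add, RicS_add, RicS_smul, RicS_smul, RicS_smul, RicS_mu hg.symm hF,
    RicS_wedge hg _ hS, RicS_prodB hg hΛ, RicS_wedge hg _ hΛ, htr, trg_lamB hg.symm]
  funext x y
  simp only [Pi.smul_apply, Pi.add_apply, Pi.sub_apply, Pi.zero_apply, smul_eq_mul, symB, lamB]
  field_simp
  ring

lemma RicS_pi8 (hg : IsNondegSymm g) (hn₂ : n ≠ 2) (hF : F ∈ rSet V) :
    RicS n b g (pi8 n b g F) = 0 := by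
  have : (n : ℝ) - 2 ≠ 0 := sub_ne_zero.2 (by exact_mod_cast hn₂)
  have hRic : IsBilin (Ric n b g F) := isBilin_Ric hF.1
  have hRicS : IsBilin (RicS n b g F) := isBilin_RicS hF.1
  have hΛ := (hRic.add hRicS).lamB
  rw [pi8, RicS_add, RicS_add, RicS_sub, RicS_sub, RicS_smul, RicS_smul, RicS_psi hg.symm,
    RicS_mu hg.symm hF, RicS_prodB hg hΛ, RicS_wedge hg _ hΛ, trg_lamB hg.symm]
  funext x y
  simp only [Pi.smul_apply, Pi.add_apply, Pi.sub_apply, Pi.zero_apply, smul_eq_mul, lamB]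
  field_simp
  ring

end Projections

theorem stmt8 {V : Type*} [AddCommGroup V] [Module ℝ V]
    (n : ℕ) (hn : 3 ≤ n) (b : Module.Basis (Fin n) ℝ V)
    (g : V → V → ℝ) (hgb : IsBilin g) (hgs : ∀ x y, g x y = g y x)
    (hgnd : ∀ x : V, (∀ y : V, g x y = 0) → x = 0) :
    ∀ F ∈ rSet V,
      RicS n b g (pi1 n b g F) = ((tau n b g F) / (n : ℝ)) • g ∧
      RicS n b g (pi2 n b g F) =
        ((1 : ℝ) / ((n : ℝ) - 1)) • (((tau n b g F) / (n : ℝ)) • g - symB (Ric n b g F)) ∧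
      RicS n b g (pi3 n b g F) = ((-3 : ℝ) / ((n : ℝ) + 1)) • lamB (Ric n b g F) ∧
      RicS n b g (pi4 n b g F) =
        lamB (RicS n b g F + ((3 : ℝ) / ((n : ℝ) + 1)) • Ric n b g F) ∧
      RicS n b g (pi5 n b g F) = (-(tau n b g F) / ((n : ℝ) - 1)) • g
          + symB (((1 : ℝ) / ((n : ℝ) - 1)) • Ric n b g F + RicS n b g F) ∧
      RicS n b g (pi6 n b g F) = 0 ∧ RicS n b g (pi7 n b g F) = 0 ∧
      RicS n b g (pi8 n b g F) = 0 ∧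
      trg n b g (RicS n b g (pi2 n b g F)) = 0 ∧ trg n b g (RicS n b g (pi3 n b g F)) = 0 ∧
      trg n b g (RicS n b g (pi4 n b g F)) = 0 ∧ trg n b g (RicS n b g (pi5 n b g F)) = 0 ∧
      trg n b g (RicS n b g (pi6 n b g F)) = 0 ∧ trg n b g (RicS n b g (pi7 n b g F)) = 0 ∧
      trg n b g (RicS n b g (pi8 n b g F)) = 0 := by
  intro F hF
  have hg : IsNondegSymm g := ⟨hgb, hgs, hgnd⟩
  have hn₀ : n ≠ 0 := by omega
  have hn₁ : n ≠ 1 := by omega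
  have hn₂ : n ≠ 2 := by omega
  refine ⟨RicS_pi1 hg hn₁ F, RicS_pi2 hg hn₀ hF.1, RicS_pi3 hg hF.1, RicS_pi4 hg hn₂ hF.1,
    RicS_pi5 hg hn hF.1, RicS_pi6 hg hn₁ hn₂ hF.1, RicS_pi7 hg hn₀ hF, RicS_pi8 hg hn₂ hF,
    trg_RicS_pi2 hg hn₀ hF.1, ?_, ?_, trg_RicS_pi5 hg hn hF.1, ?_, ?_, ?_⟩
  · rw [RicS_pi3 hg hF.1, trg_smul, trg_lamB hgs, mul_zero]
  · rw [RicS_pi4 hg hn₂ hF.1, trg_lamB hgs]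
  · rw [RicS_pi6 hg hn₁ hn₂ hF.1, trg_zero]
  · rw [RicS_pi7 hg hn₀ hF, trg_zero]
  · rw [RicS_pi8 hg hn₂ hF, trg_zero]

end GCT
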